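/- For every integer k ≥ 3 and every integer t ≥ 1, the largest real zero λ^{(t)} of G_t is strictly smaller than the largest real zero μ^{(t)} of F_t. -/
import Mathlib


open Polynomial

/-- The adjacency matrix of a simple graph over `ℝ` is Hermitian. -/
theorem adjMatrix_isHermitian {V : Type*} [Fintype V] [DecidableEq V]
    (G : SimpleGraph V) [DecidableRel G.Adj] : (G.adjMatrix ℝ).IsHermitian := by
  rw [Matrix.IsHermitian, Matrix.conjTranspose_eq_transpose_of_trivial]
  exact G.isSymm_adjMatrix

/-- The multiset of adjacency eigenvalues (with multiplicity) of a finite simple graph. -/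
noncomputable def eigMultiset {V : Type*} [Fintype V] [DecidableEq V]
    (G : SimpleGraph V) [DecidableRel G.Adj] : Multiset ℝ :=
  Multiset.map (adjMatrix_isHermitian G).eigenvalues Finset.univ.val

/-- The second largest adjacency eigenvalue (with multiplicity) of a finite simple graph:
the second-to-last entry of the nondecreasing sorted list of eigenvalues. -/
noncomputable def secondEigenvalue {V : Type*} [Fintype V] [DecidableEq V]
    (G : SimpleGraph V) [DecidableRel G.Adj] : ℝ :=
  ((eigMultiset G).sort (· ≤ ·)).getD (((eigMultiset G).sort (· ≤ ·)).length - 2) 0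

/-- The largest adjacency eigenvalue (spectral radius) of a finite simple graph. -/
noncomputable def largestEigenvalue {V : Type*} [Fintype V] [DecidableEq V]
    (G : SimpleGraph V) [DecidableRel G.Adj] : ℝ :=
  ((eigMultiset G).sort (· ≤ ·)).getD (((eigMultiset G).sort (· ≤ ·)).length - 1) 0

/-- The orthogonal polynomials `F_i^{(k)}`. -/
noncomputable def Fpoly (k : ℕ) : ℕ → Polynomial ℝ
  | 0 => 1
  | 1 => X
  | 2 => X ^ 2 - C (k : ℝ)
  | n + 3 => X * Fpoly k (n + 2) - C ((k : ℝ) - 1) * Fpoly k (n + 1)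

/-- `G_i = Σ_{j=0}^i F_j`. -/
noncomputable def Gpoly (k : ℕ) (i : ℕ) : Polynomial ℝ :=
  ∑ j ∈ Finset.range (i + 1), Fpoly k j

/-- The tridiagonal matrix `T(k,t,c)`: superdiagonal `(k, k-1, …, k-1)`,
subdiagonal `(1, …, 1, c)`, diagonal chosen so that every row sums to `k`. -/
noncomputable def Tmat (k t : ℕ) (c : ℝ) : Matrix (Fin t) (Fin t) ℝ :=
  Matrix.of fun i j =>
    if (j : ℕ) = (i : ℕ) + 1 then (if (i : ℕ) = 0 then (k : ℝ) else (k : ℝ) - 1)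
    else if (i : ℕ) = (j : ℕ) + 1 then (if (i : ℕ) = t - 1 then c else 1)
    else if i = j then
      (k : ℝ) - (if (i : ℕ) + 1 < t then (if (i : ℕ) = 0 then (k : ℝ) else (k : ℝ) - 1) else 0)
        - (if 0 < (i : ℕ) then (if (i : ℕ) = t - 1 then c else 1) else 0)
    else 0

/-- `M(k,t,c) = 1 + Σ_{i=0}^{t-3} k (k-1)^i + k (k-1)^{t-2} / c`. -/
noncomputable def Mbound (k t : ℕ) (c : ℝ) : ℝ :=
  1 + (∑ i ∈ Finset.range (t - 2), (k : ℝ) * ((k : ℝ) - 1) ^ i)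
    + (k : ℝ) * ((k : ℝ) - 1) ^ (t - 2) / c

/-- If a monic polynomial of positive degree is `≤ 0` at `x0`, it has a root `≥ x0`. -/
lemma exists_root_ge (p : Polynomial ℝ) (hm : p.Monic) (hd : 0 < p.natDegree)
    (x0 : ℝ) (hx0 : p.eval x0 ≤ 0) : ∃ r, x0 ≤ r ∧ p.IsRoot r := by
  have hdeg : 0 < p.degree := natDegree_pos_iff_degree_pos.mp hd
  have htop : Filter.Tendsto (fun x => p.eval x) Filter.atTop Filter.atTop :=
    p.tendsto_atTop_of_leadingCoeff_nonneg hdeg (by rw [hm.leadingCoeff]; norm_num)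
  obtain ⟨y, hy⟩ := (htop.eventually_ge_atTop 1).and (Filter.eventually_ge_atTop x0) |>.exists
  have hcont : ContinuousOn (fun x => p.eval x) (Set.Icc x0 y) :=
    (p.continuous_aeval).continuousOn
  have h0 : (0:ℝ) ∈ Set.Icc (p.eval x0) (p.eval y) := ⟨hx0, by linarith [hy.1]⟩
  obtain ⟨r, hr, hr0⟩ := intermediate_value_Icc hy.2 hcont h0
  exact ⟨r, hr.1, hr0⟩

/-- Generic step: `X * p - C c * q` is monic of degree `n+2`. -/
lemma step_monic {p q : Polynomial ℝ} {n : ℕ} (hp : p.Monic) (hpd : p.natDegree = n + 1)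
    (hqd : q.natDegree ≤ n) (c : ℝ) :
    (X * p - C c * q).Monic ∧ (X * p - C c * q).natDegree = n + 2 := by
  have hp0 : p ≠ 0 := hp.ne_zero
  have h1 : (X * p).Monic := (monic_X).mul hp
  have d1 : (X * p).natDegree = n + 2 := by
    rw [natDegree_X_mul hp0, hpd]
  have d2 : (C c * q).natDegree < (X * p).natDegree := by
    rw [d1]
    exact lt_of_le_of_lt ((natDegree_C_mul_le c q).trans hqd) (by omega)
  have hdeg : (C c * q).degree < (X * p).degree := by
    rcases eq_or_ne (C c * q) 0 with h | h
    · rw [h, degree_zero]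
      exact bot_lt_iff_ne_bot.mpr (degree_eq_bot.not.mpr h1.ne_zero)
    · rwa [degree_eq_natDegree h, degree_eq_natDegree h1.ne_zero, Nat.cast_lt]
  refine ⟨h1.sub_of_left hdeg, ?_⟩
  rw [sub_eq_add_neg, natDegree_add_eq_left_of_natDegree_lt (by simpa using d2), d1]

lemma Fpoly_monic (k : ℕ) : ∀ n, (Fpoly k n).Monic ∧ (Fpoly k n).natDegree = n := by
  intro n
  induction n using Nat.strong_induction_on with
  | _ n ih =>
    match n with
    | 0 => exact ⟨monic_one, natDegree_one⟩
    | 1 => exact ⟨monic_X, natDegree_X⟩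
    | 2 =>
      constructor
      · unfold Fpoly
        apply (monic_X_pow 2).sub_of_left
        exact lt_of_le_of_lt (degree_C_le) (by rw [degree_X_pow]; norm_num)
      · unfold Fpoly
        rw [sub_eq_add_neg, natDegree_add_eq_left_of_natDegree_lt] <;>
          simp [natDegree_X_pow]
    | (m + 3) =>
      have h2 := ih (m + 2) (by omega)
      have h1 := ih (m + 1) (by omega)
      exact step_monic h2.1 h2.2 (le_of_eq h1.2) _

lemma Gpoly_succ (k i : ℕ) : Gpoly k (i + 1) = Gpoly k i + Fpoly k (i + 1) := by
  unfold Gpoly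
  rw [Finset.sum_range_succ]

lemma Gpoly_rec (k : ℕ) : ∀ n, Gpoly k (n + 2) = X * Gpoly k (n + 1) - C ((k : ℝ) - 1) * Gpoly k n := by
  intro n
  induction n with
  | zero =>
    show Gpoly k 2 = _
    have h0 : Gpoly k 0 = 1 := by simp [Gpoly, Fpoly]
    have h1 : Gpoly k 1 = 1 + X := by
      unfold Gpoly
      rw [Finset.sum_range_succ, Finset.sum_range_one]
      rfl
    have h2 : Gpoly k 2 = 1 + X + (X ^ 2 - C (k:ℝ)) := by
      rw [show (2:ℕ) = 1 + 1 from rfl, Gpoly_succ, h1]; rfl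
    rw [h0, h1, h2, map_sub, map_one]
    ring
  | succ m ihm =>
    have hG3 : Gpoly k (m + 3) = Gpoly k (m + 2) + Fpoly k (m + 3) := Gpoly_succ k (m + 2)
    have hG2 : Gpoly k (m + 2) = Gpoly k (m + 1) + Fpoly k (m + 2) := Gpoly_succ k (m + 1)
    have hG1 : Gpoly k (m + 1) = Gpoly k m + Fpoly k (m + 1) := Gpoly_succ k m
    have hrec : Fpoly k (m + 3) = X * Fpoly k (m + 2) - C ((k : ℝ) - 1) * Fpoly k (m + 1) := rfl
    show Gpoly k (m + 3) = X * Gpoly k (m + 2) - C ((k : ℝ) - 1) * Gpoly k (m + 1)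
    linear_combination hG3 + hrec - X * hG2 + C ((k : ℝ) - 1) * hG1 + ihm

lemma Gpoly_monic (k : ℕ) : ∀ n, (Gpoly k n).Monic ∧ (Gpoly k n).natDegree = n := by
  intro n
  induction n using Nat.strong_induction_on with
  | _ n ih =>
    match n with
    | 0 => simp [Gpoly, Fpoly, monic_one]
    | 1 =>
      have h1 : Gpoly k 1 = 1 + X := by
        unfold Gpoly
        rw [Finset.sum_range_succ, Finset.sum_range_one]
        rfl
      rw [h1]
      constructor
      · exact monic_X.add_of_right (by rw [degree_X]; exact lt_of_le_of_lt degree_one_le (by norm_num))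
      · rw [add_comm, natDegree_add_eq_left_of_natDegree_lt (by simp)]
        exact natDegree_X
    | (m + 2) =>
      rw [Gpoly_rec]
      have h2 := ih (m + 1) (by omega)
      have h1 := ih m (by omega)
      exact step_monic h2.1 h2.2 (le_of_eq h1.2) _

lemma pos_of_gt_max (p : Polynomial ℝ) (hm : p.Monic) (hd : 0 < p.natDegree) (mu : ℝ)
    (hmax : ∀ x, p.IsRoot x → x ≤ mu) : ∀ x, mu < x → 0 < p.eval x := by
  intro x hx
  by_contra h
  push_neg at h
  obtain ⟨r, hr1, hr2⟩ := exists_root_ge p hm hd x h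
  exact absurd (hmax r hr2) (by linarith)

lemma top_root (p : Polynomial ℝ) (hm : p.Monic) (hd : 0 < p.natDegree) (x0 : ℝ)
    (hx0 : p.eval x0 ≤ 0) :
    ∃ m, x0 ≤ m ∧ p.IsRoot m ∧ ∀ x, m < x → 0 < p.eval x := by
  obtain ⟨r, hr1, hr2⟩ := exists_root_ge p hm hd x0 hx0
  have hp0 : p ≠ 0 := hm.ne_zero
  have hne : p.roots.toFinset.Nonempty :=
    ⟨r, by simp only [Multiset.mem_toFinset, mem_roots hp0]; exact hr2⟩
  set m := p.roots.toFinset.max' hne with hmdef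
  have hmax : ∀ x, p.IsRoot x → x ≤ m := by
    intro x hx
    exact Finset.le_max' _ x (by simp only [Multiset.mem_toFinset, mem_roots hp0]; exact hx)
  have hmroot : p.IsRoot m := by
    have := p.roots.toFinset.max'_mem hne
    rw [Multiset.mem_toFinset, mem_roots hp0] at this
    exact this
  exact ⟨m, le_trans hr1 (hmax r hr2), hmroot, pos_of_gt_max p hm hd m hmax⟩

lemma Gpoly_one (k : ℕ) : Gpoly k 1 = 1 + X := by
  unfold Gpoly
  rw [Finset.sum_range_succ, Finset.sum_range_one]
  rfl

lemma key (k : ℕ) (hk : 3 ≤ k) : ∀ t, 1 ≤ t →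
    ∃ l, (Gpoly k t).eval l = 0 ∧ (∀ x, l < x → 0 < (Gpoly k t).eval x) ∧
      (∀ x, l ≤ x → 0 < (Gpoly k (t - 1)).eval x) := by
  have hkR : (2:ℝ) ≤ (k:ℝ) - 1 := by
    have : (3:ℝ) ≤ (k:ℝ) := by exact_mod_cast hk
    linarith
  intro t ht
  induction t, ht using Nat.le_induction with
  | base =>
    refine ⟨-1, ?_, ?_, ?_⟩
    · simp [Gpoly_one]
    · intro x hx; simp [Gpoly_one]; linarith
    · intro x _
      have : Gpoly k 0 = 1 := by simp [Gpoly, Fpoly]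
      simp [this]
  | succ n hn ih =>
    obtain ⟨m, rfl⟩ : ∃ m, n = m + 1 := ⟨n - 1, by omega⟩
    obtain ⟨l, hl0, hlpos, hlprev⟩ := ih
    have hGm : 0 < (Gpoly k m).eval l := by
      have := hlprev l le_rfl
      simpa using this
    have hneg : (Gpoly k (m + 2)).eval l < 0 := by
      rw [Gpoly_rec k m]
      simp only [eval_sub, eval_mul, eval_X, eval_C, hl0]
      nlinarith
    have hmon := Gpoly_monic k (m + 2)
    obtain ⟨M, hM1, hM2, hM3⟩ :=
      top_root (Gpoly k (m + 2)) hmon.1 (by rw [hmon.2]; omega) l hneg.le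
    have hlM : l < M := lt_of_le_of_ne hM1 (by
      intro h
      rw [← h] at hM2
      exact absurd hM2 (by simp [IsRoot]; linarith))
    refine ⟨M, hM2, hM3, ?_⟩
    intro x hx
    have : l < x := lt_of_lt_of_le hlM hx
    simpa using hlpos x this

theorem stmt7 (k t : ℕ) (hk : 3 ≤ k) (ht : 1 ≤ t) (lam mu : ℝ)
    (hlam : (Gpoly k t).IsRoot lam) (hlammax : ∀ x : ℝ, (Gpoly k t).IsRoot x → x ≤ lam)
    (hmu : (Fpoly k t).IsRoot mu) (hmumax : ∀ x : ℝ, (Fpoly k t).IsRoot x → x ≤ mu) :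
    lam < mu := by
  obtain ⟨l, hl0, hlpos, hlprev⟩ := key k hk t ht
  have h1 : l ≤ lam := hlammax l hl0
  have h2 : lam ≤ l := by
    by_contra h
    push_neg at h
    have hpos := hlpos lam h
    rw [hlam.eq_zero] at hpos
    exact lt_irrefl 0 hpos
  have hle : lam = l := le_antisymm h2 h1
  subst hle
  -- F_t(lam) < 0
  have hFlam : (Fpoly k t).eval lam < 0 := by
    obtain ⟨m, rfl⟩ : ∃ m, t = m + 1 := ⟨t - 1, by omega⟩
    have hGs : Gpoly k (m + 1) = Gpoly k m + Fpoly k (m + 1) := Gpoly_succ k m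
    have hGm : 0 < (Gpoly k m).eval lam := by simpa using hlprev lam le_rfl
    have : (Gpoly k (m + 1)).eval lam = (Gpoly k m).eval lam + (Fpoly k (m + 1)).eval lam := by
      rw [hGs, eval_add]
    rw [hl0] at this
    linarith
  have hFmon := Fpoly_monic k t
  have hFpos := pos_of_gt_max (Fpoly k t) hFmon.1 (by rw [hFmon.2]; omega) mu hmumax
  by_contra h
  push_neg at h
  rcases lt_or_eq_of_le h with h' | h'
  · exact absurd (hFpos lam h') (by linarith)
  · rw [h'] at hmu
    rw [hmu.eq_zero] at hFlam
    exact lt_irrefl 0 hFlam
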